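/- A real symmetric matrix is positive semidefinite if and only if all of its principal minors (determinants of principal submatrices obtained by selecting the same subset of rows and columns) are nonnegative. -/

import Mathlib

/-!
Principal submatrices of a positive semidefinite matrix are positive semidefinite, so their
determinants are nonnegative. Conversely, expanding `det (1 + t • M) = ∑ₛ t ^ |s| * det M_s`
over all index sets `s` shows that `det (1 + t • M) ≥ 1` for every `t ≥ 0` once all principal
minors are nonnegative (the empty one being `1`). A negative eigenvalue `λ` of the symmetric
matrix `M` would make `1 + t • M` singular at `t = -λ⁻¹`.
-/

open Polynomial
open scoped ComplexOrder

namespace Matrix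

variable {n : Type*} [Fintype n] [DecidableEq n]

theorem det_one_add_smul_eq_sum_minors {R : Type*} [CommRing R] (M : Matrix n n R) (t : R) :
    det (1 + t • M) =
      ∑ s : Finset n, t ^ s.card * (M.submatrix (↑) (↑) : Matrix s s R).det := by
  have heval : det (1 + t • M) = (det (1 + (X : R[X]) • M.map C)).eval t := by
    simp [eval_det, ← smul_eq_mul_diagonal]
  have hdeg : (det (1 + (X : R[X]) • M.map C)).natDegree < Fintype.card n + 1 := by
    simpa [add_comm] using Nat.lt_succ_of_le (natDegree_det_X_add_C_le M 1)
  have hcard : ∀ s ∈ (Finset.univ : Finset (Finset n)),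
      s.card ∈ Finset.range (Fintype.card n + 1) :=
    fun s _ => Finset.mem_range_succ_iff.2 s.card_le_univ
  rw [heval, eval_eq_sum_range' hdeg, ← Finset.sum_fiberwise_of_maps_to hcard]
  refine Finset.sum_congr rfl fun k _ => ?_
  rw [coeff_det_one_add_X_smul_eq_sum_minors, Finset.sum_mul, Finset.powersetCard_eq_filter,
    Finset.powerset_univ]
  exact Finset.sum_congr rfl fun s hs => by rw [(Finset.mem_filter.1 hs).2, mul_comm]

theorem one_le_det_one_add_smul_of_minors_nonneg {R : Type*} [CommRing R] [PartialOrder R]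
    [IsOrderedRing R] {M : Matrix n n R}
    (hM : ∀ s : Finset n, 0 ≤ (M.submatrix (↑) (↑) : Matrix s s R).det)
    {t : R} (ht : 0 ≤ t) :
    1 ≤ det (1 + t • M) := by
  rw [det_one_add_smul_eq_sum_minors]
  calc (1 : R)
      = t ^ (∅ : Finset n).card *
          (M.submatrix (↑) (↑) : Matrix (∅ : Finset n) (∅ : Finset n) R).det := by simp
    _ ≤ _ := Finset.single_le_sum (fun s _ => mul_nonneg (pow_nonneg ht _) (hM s))
        (Finset.mem_univ _)

variable {𝕜 : Type*} [RCLike 𝕜] {A : Matrix n n 𝕜}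

theorem IsHermitian.det_one_add_smul_eq_zero (hA : A.IsHermitian) (i : n) {t : ℝ}
    (ht : 1 + t * hA.eigenvalues i = 0) : det (1 + t • A) = 0 := by
  rw [← exists_mulVec_eq_zero_iff]
  refine ⟨hA.eigenvectorBasis i, by simpa using hA.eigenvectorBasis.orthonormal.ne_zero i, ?_⟩
  rw [add_mulVec, one_mulVec, smul_mulVec, hA.mulVec_eigenvectorBasis, smul_smul]
  nth_rewrite 1 [← one_smul ℝ (hA.eigenvectorBasis i).ofLp]
  rw [← add_smul, ht, zero_smul]

theorem IsHermitian.posSemidef_of_det_one_add_smul_ne_zero (hA : A.IsHermitian)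
    (h : ∀ t : ℝ, 0 ≤ t → det (1 + t • A) ≠ 0) : A.PosSemidef := by
  refine hA.posSemidef_iff_eigenvalues_nonneg.mpr fun i => le_of_not_gt fun hneg => ?_
  refine h (-(hA.eigenvalues i)⁻¹) (neg_nonneg.2 (inv_nonpos.2 hneg.le))
    (hA.det_one_add_smul_eq_zero i ?_)
  rw [neg_mul, inv_mul_cancel₀ hneg.ne, add_neg_cancel]

end Matrix

/-- A real symmetric matrix is positive semidefinite iff all its principal
minors (over nonempty index sets) are nonnegative. -/
theorem psd_iff_principal_minors_nonneg {n : ℕ} (M : Matrix (Fin n) (Fin n) ℝ)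
    (hM : M.IsSymm) :
    M.PosSemidef ↔
      ∀ I : Finset (Fin n), I.Nonempty →
        0 ≤ (M.submatrix (fun i : I => (i : Fin n)) (fun i : I => (i : Fin n))).det := by
  refine ⟨fun hP I _ => (hP.submatrix _).det_nonneg, fun h => ?_⟩
  have hminors : ∀ I : Finset (Fin n), 0 ≤ (M.submatrix (↑) (↑) : Matrix I I ℝ).det := by
    intro I
    rcases I.eq_empty_or_nonempty with rfl | hI
    · simp
    · exact h I hI
  have hA : M.IsHermitian := Matrix.isHermitian_iff_isSymm.2 hM
  exact hA.posSemidef_of_det_one_add_smul_ne_zero fun t ht =>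
    (zero_lt_one.trans_le (Matrix.one_le_det_one_add_smul_of_minors_nonneg hminors ht)).ne'
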